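/- Let L be the subgroup of GL₄(ℚ) generated by the four matrices D₁, D₂, M, E. Then L is isomorphic to the semidirect product V ⋊ S₄, where V = { v : Fin 4 → ZMod 2 | v 0 + v 1 + v 2 + v 3 = 0 } ≅ (ℤ/2)³ and S₄ = Equiv.Perm (Fin 4) acts on V by permuting coordinates. That is, the full group of logical operators of the toric code generated by Dehn twists and anyon loops is isomorphic to S₄ ⋉ (ℤ/2)³. -/

import Mathlib

/-- First Dehn twist operator on the toric-code ground space (skein basis). -/
def dehn₁ : Matrix (Fin 4) (Fin 4) ℚ := !![1,0,0,0; 0,1,0,0; 0,0,0,1; 0,0,1,0]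

/-- Second Dehn twist operator. -/
def dehn₂ : Matrix (Fin 4) (Fin 4) ℚ := !![1,0,0,0; 0,0,1,0; 0,1,0,0; 0,0,0,1]

/-- Horizontal `m`-anyon loop operator. -/
def mLoop : Matrix (Fin 4) (Fin 4) ℚ := !![0,1,0,0; 1,0,0,0; 0,0,0,1; 0,0,1,0]

/-- Horizontal `e`-anyon loop operator. -/
def eLoop : Matrix (Fin 4) (Fin 4) ℚ := !![1,0,0,0; 0,1,0,0; 0,0,-1,0; 0,0,0,-1]

lemma dehn₁_sq : dehn₁ * dehn₁ = 1 := by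
  ext i j
  fin_cases i <;> fin_cases j <;>
    simp [dehn₁, Matrix.mul_apply, Fin.sum_univ_four, Matrix.one_apply,
      Matrix.vecHead, Matrix.vecTail, Fin.ext_iff]

lemma dehn₂_sq : dehn₂ * dehn₂ = 1 := by
  ext i j
  fin_cases i <;> fin_cases j <;>
    simp [dehn₂, Matrix.mul_apply, Fin.sum_univ_four, Matrix.one_apply,
      Matrix.vecHead, Matrix.vecTail, Fin.ext_iff]

lemma mLoop_sq : mLoop * mLoop = 1 := by
  ext i j
  fin_cases i <;> fin_cases j <;>
    simp [mLoop, Matrix.mul_apply, Fin.sum_univ_four, Matrix.one_apply,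
      Matrix.vecHead, Matrix.vecTail, Fin.ext_iff]

lemma eLoop_sq : eLoop * eLoop = 1 := by
  ext i j
  fin_cases i <;> fin_cases j <;>
    simp [eLoop, Matrix.mul_apply, Fin.sum_univ_four, Matrix.one_apply,
      Matrix.vecHead, Matrix.vecTail, Fin.ext_iff]

/-- `D₁` as an element of `GL₄(ℚ)`. -/
def D₁ : GL (Fin 4) ℚ := ⟨dehn₁, dehn₁, dehn₁_sq, dehn₁_sq⟩

/-- `D₂` as an element of `GL₄(ℚ)`. -/
def D₂ : GL (Fin 4) ℚ := ⟨dehn₂, dehn₂, dehn₂_sq, dehn₂_sq⟩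

/-- `M` as an element of `GL₄(ℚ)`. -/
def M : GL (Fin 4) ℚ := ⟨mLoop, mLoop, mLoop_sq, mLoop_sq⟩

/-- `E` as an element of `GL₄(ℚ)`. -/
def E : GL (Fin 4) ℚ := ⟨eLoop, eLoop, eLoop_sq, eLoop_sq⟩

/-- The subgroup of `GL₄(ℚ)` generated by the two Dehn twists and the two anyon loops. -/
def L : Subgroup (GL (Fin 4) ℚ) := Subgroup.closure {D₁, D₂, M, E}

/-- The parity-zero subgroup `V = {v : Fin 4 → ZMod 2 | v 0 + v 1 + v 2 + v 3 = 0} ≅ (ℤ/2)³`. -/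
abbrev V := {v : Fin 4 → ZMod 2 // v 0 + v 1 + v 2 + v 3 = 0}

/-!
Every generator is a signed permutation matrix `diag((-1)^v) · P_σ` with `v : Fin 4 → ZMod 2`
of even weight, and multiplying two of them multiplies the permutations and adds the sign
vectors after permuting the second one; so `(v, σ) ↦ diag((-1)^v) · P_σ` identifies `V ⋊ S₄`
with the group of even signed permutation matrices. `L` is all of it: the Dehn twists and the
`m`-loop produce the adjacent transpositions, hence all of `S₄`, and the conjugates of the
`e`-loop `diag(1,1,-1,-1)` under `S₄` produce every even sign vector.
-/

open Equiv Matrix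

lemma neg_one_pow_val_add {R : Type*} [Ring R] (a b : ZMod 2) :
    (-1 : R) ^ (a + b).val = (-1) ^ a.val * (-1) ^ b.val := by
  rw [ZMod.val_add, ← neg_one_pow_eq_pow_mod_two, pow_add]

lemma neg_one_pow_val_injective {R : Type*} [Ring R] (h : (-1 : R) ≠ 1) :
    Function.Injective fun a : ZMod 2 => (-1 : R) ^ a.val := by
  have hcases : ∀ a : ZMod 2, a = 0 ∨ a = 1 := by decide
  intro a b hab
  rcases hcases a with rfl | rfl <;> rcases hcases b with rfl | rfl <;>
    simp [ZMod.val_one] at hab ⊢ <;> grind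

section SignedPerm

variable {ι R : Type*} [Fintype ι]

lemma sum_add_comp_perm_inv {M : Type*} [AddCommMonoid M] (v w : ι → M) (σ : Perm ι) :
    ∑ i, (v + fun i => w (σ⁻¹ i)) i = ∑ i, v i + ∑ i, w i := by
  simp only [Pi.add_apply, Finset.sum_add_distrib, Equiv.sum_comp σ⁻¹ w]

variable [DecidableEq ι]

lemma permMatrix_mul_diagonal [NonAssocSemiring R] (σ : Perm ι) (d : ι → R) :
    σ.permMatrix R * diagonal d = diagonal (fun i => d (σ i)) * σ.permMatrix R := by
  rw [PEquiv.toMatrix_toPEquiv_mul, PEquiv.mul_toMatrix_toPEquiv]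
  ext i j
  simp [diagonal_apply, Equiv.eq_symm_apply]

variable [CommRing R]

/-- `permMatrix` is contravariant, hence `σ⁻¹`: this matrix sends `e j` to `±e (σ j)`. -/
def signedPermMatrix (v : ι → ZMod 2) (σ : Perm ι) : Matrix ι ι R :=
  diagonal (fun i => (-1) ^ (v i).val) * σ⁻¹.permMatrix R

lemma signedPermMatrix_apply (v : ι → ZMod 2) (σ : Perm ι) (i j : ι) :
    signedPermMatrix (R := R) v σ i j = if σ j = i then (-1) ^ (v i).val else 0 := by
  simp [signedPermMatrix, diagonal_mul, PEquiv.toMatrix_apply, eq_comm, Equiv.eq_symm_apply]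

lemma signedPermMatrix_mul (v w : ι → ZMod 2) (σ τ : Perm ι) :
    signedPermMatrix (R := R) v σ * signedPermMatrix w τ =
      signedPermMatrix (v + fun i => w (σ⁻¹ i)) (σ * τ) := by
  simp only [signedPermMatrix, Matrix.mul_assoc, _root_.mul_inv_rev, permMatrix_mul]
  rw [← Matrix.mul_assoc (σ⁻¹.permMatrix R), permMatrix_mul_diagonal, Matrix.mul_assoc,
    ← Matrix.mul_assoc (diagonal _), diagonal_mul_diagonal]
  simp only [Pi.add_apply, neg_one_pow_val_add]

lemma signedPermMatrix_zero_one : signedPermMatrix (ι := ι) (R := R) 0 1 = 1 := by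
  simp [signedPermMatrix]

lemma signedPermMatrix_mul_comp_inv (v : ι → ZMod 2) (σ : Perm ι) :
    signedPermMatrix (R := R) v σ * signedPermMatrix (fun i => v (σ i)) σ⁻¹ = 1 := by
  rw [signedPermMatrix_mul, mul_inv_cancel, ← signedPermMatrix_zero_one]
  congr 1
  funext i
  simp [CharTwo.add_self_eq_zero]

def signedPerm (v : ι → ZMod 2) (σ : Perm ι) : GL ι R where
  val := signedPermMatrix v σ
  inv := signedPermMatrix (fun i => v (σ i)) σ⁻¹
  val_inv := signedPermMatrix_mul_comp_inv v σ
  inv_val := by simpa using signedPermMatrix_mul_comp_inv (fun i => v (σ i)) σ⁻¹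

lemma signedPerm_mul (v w : ι → ZMod 2) (σ τ : Perm ι) :
    signedPerm (R := R) v σ * signedPerm w τ = signedPerm (v + fun i => w (σ⁻¹ i)) (σ * τ) :=
  Units.ext (signedPermMatrix_mul v w σ τ)

@[simp] lemma signedPerm_zero_one : signedPerm (ι := ι) (R := R) 0 1 = 1 :=
  Units.ext signedPermMatrix_zero_one

lemma signedPerm_inv (v : ι → ZMod 2) (σ : Perm ι) :
    (signedPerm (R := R) v σ)⁻¹ = signedPerm (fun i => v (σ i)) σ⁻¹ :=
  Units.ext rfl

lemma signedPerm_inj (h : (-1 : R) ≠ 1) {v w : ι → ZMod 2} {σ τ : Perm ι} :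
    signedPerm (R := R) v σ = signedPerm w τ ↔ v = w ∧ σ = τ := by
  refine ⟨fun hvw => ?_, fun ⟨rfl, rfl⟩ => rfl⟩
  have hentry (i j : ι) := congr_arg (fun g : GL ι R => (g : Matrix ι ι R) i j) hvw
  simp only [signedPerm, signedPermMatrix_apply] at hentry
  have : Nontrivial R := nontrivial_of_ne _ _ h
  have hσ : σ = τ := Equiv.ext fun j => by
    by_contra hne
    simpa [Ne.symm hne, ((isUnit_neg_one (α := R)).pow _).ne_zero] using hentry (σ j) j
  subst hσ
  exact ⟨funext fun i => neg_one_pow_val_injective h (by simpa using hentry i (σ⁻¹ i)), rfl⟩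

lemma signedPerm_conj (u : ι → ZMod 2) (σ : Perm ι) :
    signedPerm (R := R) 0 σ * signedPerm u 1 * (signedPerm 0 σ)⁻¹ =
      signedPerm (fun i => u (σ⁻¹ i)) 1 := by
  simp [signedPerm_inv, signedPerm_mul, ← Pi.zero_def]

variable (ι R) in
def permGLHom : Perm ι →* GL ι R where
  toFun σ := signedPerm 0 σ
  map_one' := signedPerm_zero_one
  map_mul' σ τ := by simp [signedPerm_mul, ← Pi.zero_def]

lemma signedPerm_mem_of_sum_eq_zero {H : Subgroup (GL ι R)} (i₀ : ι)
    (hpair : ∀ j, signedPerm (Pi.single i₀ 1 + Pi.single j 1) 1 ∈ H) {v : ι → ZMod 2}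
    (hv : ∑ i, v i = 0) : signedPerm v 1 ∈ H := by
  have hsingle : ∑ j, Pi.single i₀ (v j) = (Pi.single i₀ (∑ j, v j) : ι → ZMod 2) :=
    (map_sum (AddMonoidHom.single (fun _ => ZMod 2) i₀) v _).symm
  have hdecomp : v = ∑ j, (Pi.single i₀ (v j) + Pi.single j (v j)) := by
    rw [Finset.sum_add_distrib, Finset.univ_sum_single, hsingle, hv, Pi.single_zero, zero_add]
  rw [hdecomp]
  refine Finset.sum_induction _ (fun w => signedPerm w 1 ∈ H) (fun a b ha hb => ?_)
    (by simp [H.one_mem]) (fun j _ => ?_)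
  · simpa [signedPerm_mul] using H.mul_mem ha hb
  · have hcases : ∀ a : ZMod 2, a = 0 ∨ a = 1 := by decide
    rcases hcases (v j) with h | h <;> rw [h]
    · simp [H.one_mem]
    · exact hpair j

variable (ι R) in
def evenSignedPerms : Subgroup (GL ι R) where
  carrier := {g | ∃ v σ, ∑ i, v i = 0 ∧ signedPerm v σ = g}
  one_mem' := ⟨0, 1, by simp, signedPerm_zero_one⟩
  mul_mem' := by
    rintro _ _ ⟨v, σ, hv, rfl⟩ ⟨w, τ, hw, rfl⟩
    exact ⟨_, _, by rw [sum_add_comp_perm_inv, hv, hw, add_zero], (signedPerm_mul v w σ τ).symm⟩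
  inv_mem' := by
    rintro _ ⟨v, σ, hv, rfl⟩
    exact ⟨_, _, by rwa [Equiv.sum_comp σ v], (signedPerm_inv v σ).symm⟩

noncomputable def evenSignedPermsEquiv (h : (-1 : R) ≠ 1) :
    evenSignedPerms ι R ≃ {v : ι → ZMod 2 // ∑ i, v i = 0} × Perm ι :=
  (Equiv.ofBijective (fun p => ⟨signedPerm p.1.1 p.2, p.1, p.2, p.1.2, rfl⟩)
    ⟨fun p q hpq => by
      obtain ⟨hv, hσ⟩ := (signedPerm_inj h).1 (congr_arg Subtype.val hpq)
      exact Prod.ext (Subtype.ext hv) hσ,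
    fun ⟨_, v, σ, hv, hg⟩ => ⟨(⟨v, hv⟩, σ), Subtype.ext hg⟩⟩).symm

lemma evenSignedPermsEquiv_mul (h : (-1 : R) ≠ 1) (x y : evenSignedPerms ι R) :
    let e := evenSignedPermsEquiv h
    ((e (x * y)).1.val = (e x).1.val + fun i => (e y).1.val ((e x).2⁻¹ i)) ∧
      (e (x * y)).2 = (e x).2 * (e y).2 := by
  intro e
  obtain ⟨⟨⟨v, hv⟩, σ⟩, rfl⟩ := e.symm.surjective x
  obtain ⟨⟨⟨w, hw⟩, τ⟩, rfl⟩ := e.symm.surjective y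
  have hprod : e.symm (⟨v, hv⟩, σ) * e.symm (⟨w, hw⟩, τ) =
      e.symm (⟨v + fun i => w (σ⁻¹ i), by rw [sum_add_comp_perm_inv, hv, hw, add_zero]⟩, σ * τ) :=
    Subtype.ext (signedPerm_mul v w σ τ)
  simp [hprod]

end SignedPerm

lemma D₁_eq_signedPerm : D₁ = signedPerm 0 (swap 2 3) := by
  ext i j
  fin_cases i <;> fin_cases j <;>
    simp [D₁, dehn₁, signedPerm, signedPermMatrix_apply, swap_apply_def]

lemma D₂_eq_signedPerm : D₂ = signedPerm 0 (swap 1 2) := by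
  ext i j
  fin_cases i <;> fin_cases j <;>
    simp [D₂, dehn₂, signedPerm, signedPermMatrix_apply, swap_apply_def]

lemma M_eq_signedPerm : M = signedPerm 0 (swap 0 1 * swap 2 3) := by
  ext i j
  fin_cases i <;> fin_cases j <;>
    simp [M, mLoop, signedPerm, signedPermMatrix_apply, swap_apply_def]

lemma E_eq_signedPerm : E = signedPerm (Pi.single 2 1 + Pi.single 3 1) 1 := by
  ext i j
  fin_cases i <;> fin_cases j <;>
    simp [E, eLoop, signedPerm, signedPermMatrix_apply, ZMod.val_one]

lemma L_le_evenSignedPerms : L ≤ evenSignedPerms (Fin 4) ℚ := by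
  rw [L, Subgroup.closure_le]
  rintro _ (rfl | rfl | rfl | rfl)
  · exact ⟨0, _, by simp, D₁_eq_signedPerm.symm⟩
  · exact ⟨0, _, by simp, D₂_eq_signedPerm.symm⟩
  · exact ⟨0, _, by simp, M_eq_signedPerm.symm⟩
  · exact ⟨_, 1, by decide, E_eq_signedPerm.symm⟩

lemma signedPerm_zero_mem_L (σ : Perm (Fin 4)) : signedPerm 0 σ ∈ L := by
  have hD₁ : signedPerm 0 (swap 2 3) ∈ L := D₁_eq_signedPerm ▸ Subgroup.subset_closure (by simp)
  have hD₂ : signedPerm 0 (swap 1 2) ∈ L := D₂_eq_signedPerm ▸ Subgroup.subset_closure (by simp)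
  have hM : signedPerm 0 (swap 0 1 * swap 2 3) ∈ L :=
    M_eq_signedPerm ▸ Subgroup.subset_closure (by simp)
  have hgen : Set.range (fun i : Fin 3 => swap i.castSucc i.succ) ⊆
      L.comap (permGLHom (Fin 4) ℚ) := by
    rintro _ ⟨i, rfl⟩
    fin_cases i
    · simpa [permGLHom, signedPerm_mul, ← Pi.zero_def, mul_assoc] using L.mul_mem hM hD₁
    · exact hD₂
    · exact hD₁
  have htop := Subgroup.closure_eq_top_of_mclosure_eq_top (Perm.mclosure_swap_castSucc_succ 3)
  exact (Subgroup.closure_le _).2 hgen (htop ▸ Subgroup.mem_top σ)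

lemma signedPerm_mem_L_of_sum_eq_zero {v : Fin 4 → ZMod 2} (hv : ∑ i, v i = 0) :
    signedPerm v 1 ∈ L := by
  have hE : signedPerm (Pi.single 2 1 + Pi.single 3 1) 1 ∈ L :=
    E_eq_signedPerm ▸ Subgroup.subset_closure (by simp)
  have hconj (σ : Perm (Fin 4)) := signedPerm_conj (R := ℚ) _ σ ▸
    L.mul_mem (L.mul_mem (signedPerm_zero_mem_L σ) hE) (L.inv_mem (signedPerm_zero_mem_L σ))
  refine signedPerm_mem_of_sum_eq_zero 0 (fun j => ?_) hv
  -- conjugate `E` by a permutation sending `{2, 3}` onto `{0, j}`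
  fin_cases j
  · simp [CharTwo.add_self_eq_zero, L.one_mem]
  · convert hconj (swap 0 2 * swap 1 3) using 2
    decide
  · convert hconj (swap 0 3) using 2
    decide
  · convert hconj (swap 0 2) using 2
    decide

lemma evenSignedPerms_le_L : evenSignedPerms (Fin 4) ℚ ≤ L := by
  rintro _ ⟨v, σ, hv, rfl⟩
  have hsplit : signedPerm v σ = signedPerm (R := ℚ) v 1 * signedPerm 0 σ := by
    simp [signedPerm_mul, ← Pi.zero_def]
  rw [hsplit]
  exact L.mul_mem (signedPerm_mem_L_of_sum_eq_zero hv) (signedPerm_zero_mem_L σ)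

/-- `L` is isomorphic to the semidirect product `V ⋊ S₄`, where `S₄` acts on `V` by
permuting coordinates: there is a bijection `e : L ≃ V × S₄` carrying the group law of
`L` to the semidirect-product law `(v,σ)·(w,τ) = (v + σ•w, σ·τ)` with `(σ•w) i = w (σ⁻¹ i)`. -/
theorem toricCode_logical_operators_semidirect :
    ∃ e : L ≃ (V × Equiv.Perm (Fin 4)),
      ∀ x y : L,
        ((e (x * y)).1.val =
          (e x).1.val + fun i => (e y).1.val (((e x).2)⁻¹ i)) ∧
        (e (x * y)).2 = (e x).2 * (e y).2 := by
  have hL : L = evenSignedPerms (Fin 4) ℚ := le_antisymm L_le_evenSignedPerms evenSignedPerms_le_L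
  have hV (v : Fin 4 → ZMod 2) : v 0 + v 1 + v 2 + v 3 = 0 ↔ ∑ i, v i = 0 := by
    rw [Fin.sum_univ_four]
  let e := (MulEquiv.subgroupCongr hL).toEquiv.trans <| (evenSignedPermsEquiv (by norm_num)).trans
    ((Equiv.subtypeEquivRight hV).symm.prodCongr (Equiv.refl _))
  refine ⟨e, fun x y => ?_⟩
  simpa [e] using evenSignedPermsEquiv_mul _ (MulEquiv.subgroupCongr hL x)
    (MulEquiv.subgroupCongr hL y)
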